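/- arXiv:2510.18378 — 3 statements merged into one kernel-verified Lean document; each statement's English description precedes it below -/
import Mathlib

section
/- Let μ > 0, ℓ = |μ-1|/2, and ρ(t) = (1+t)^{(μ+1)/2}·K_ℓ(1+t). Then for all t ≥ 0, μ/(1+t) - ρ'(t)/ρ(t) > 0. -/
open MeasureTheory Set Real Filter Metric

private lemma gauss_lin_integrable (b a : ℝ) (hb : 0 < b) :
    Integrable (fun y : ℝ => Real.exp (-b * y ^ 2 + a * y)) := by
  have h : ∀ y : ℝ, -b * y ^ 2 + a * y
      = a ^ 2 / (4 * b) + -b * (y - a / (2 * b)) ^ 2 := by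
    intro y; field_simp; ring
  simp_rw [h, Real.exp_add]
  exact ((integrable_exp_neg_mul_sq hb).comp_sub_right (a / (2 * b))).const_mul _

private lemma cosh_quad {y : ℝ} (hy : 0 ≤ y) : 1 + y ^ 2 / 2 ≤ Real.cosh y := by
  have h1 : Real.cosh y = 1 + 2 * Real.sinh (y / 2) ^ 2 := by
    have := Real.cosh_two_mul (y / 2)
    have h2 := Real.cosh_sq (y / 2)
    rw [show (2 : ℝ) * (y / 2) = y by ring] at this
    rw [this, h2]; ring
  have h3 : y / 2 ≤ Real.sinh (y / 2) := Real.self_le_sinh_iff.mpr (by linarith)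
  nlinarith [h3, hy]

private lemma cosh_le_exp_abs (x : ℝ) : Real.cosh x ≤ Real.exp |x| := by
  rw [Real.cosh_eq]
  have h1 := Real.exp_le_exp.mpr (le_abs_self x)
  have h2 := Real.exp_le_exp.mpr (neg_le_abs x)
  linarith

/-- pointwise bound -/
private lemma point_bound (ν c s y : ℝ) (hc : 0 < c) (hcs : c ≤ s) (hy : 0 ≤ y) :
    Real.cosh y * (Real.exp (-s * Real.cosh y) * Real.cosh (ν * y))
      ≤ Real.exp (-c) * Real.exp (-(c / 2) * y ^ 2 + (|ν| + 1) * y) := by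
  have hch := Real.cosh_pos y
  have hq := cosh_quad hy
  have h1 : Real.exp (-s * Real.cosh y) ≤ Real.exp (-c * (1 + y ^ 2 / 2)) := by
    apply Real.exp_le_exp.mpr; nlinarith
  have h2 : Real.cosh (ν * y) ≤ Real.exp (|ν| * y) := by
    have := cosh_le_exp_abs (ν * y)
    rwa [abs_mul, abs_of_nonneg hy] at this
  have h3 : Real.cosh y ≤ Real.exp y := by
    have := cosh_le_exp_abs y; rwa [abs_of_nonneg hy] at this
  calc Real.cosh y * (Real.exp (-s * Real.cosh y) * Real.cosh (ν * y))
      ≤ Real.exp y * (Real.exp (-c * (1 + y ^ 2 / 2)) * Real.exp (|ν| * y)) := by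
        apply mul_le_mul h3 _ (by positivity) (Real.exp_pos _).le
        exact mul_le_mul h1 h2 (Real.cosh_pos _).le (Real.exp_pos _).le
    _ = Real.exp (-c) * Real.exp (-(c / 2) * y ^ 2 + (|ν| + 1) * y) := by
        rw [← Real.exp_add, ← Real.exp_add, ← Real.exp_add]; congr 1; ring

private lemma integrand_nonneg (ν s y : ℝ) :
    0 ≤ Real.exp (-s * Real.cosh y) * Real.cosh (ν * y) :=
  mul_nonneg (Real.exp_pos _).le (Real.cosh_pos _).le

private lemma integrable1 (ν s : ℝ) (hs : 0 < s) :
    IntegrableOn (fun y => Real.cosh y *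
      (Real.exp (-s * Real.cosh y) * Real.cosh (ν * y))) (Set.Ioi (0 : ℝ)) := by
  have hbound : Integrable (fun y : ℝ =>
      Real.exp (-s) * Real.exp (-(s / 2) * y ^ 2 + (|ν| + 1) * y)) :=
    (gauss_lin_integrable (s / 2) (|ν| + 1) (by linarith)).const_mul _
  apply Integrable.mono (hbound.restrict (s := Set.Ioi 0))
  · exact (Continuous.aestronglyMeasurable (by continuity)).restrict
  · filter_upwards [ae_restrict_mem measurableSet_Ioi] with y hy
    rw [Real.norm_eq_abs, Real.norm_eq_abs,
      abs_of_nonneg (mul_nonneg (Real.cosh_pos _).le (integrand_nonneg ν s y)),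
      abs_of_nonneg (by positivity)]
    exact point_bound ν s s y hs le_rfl (le_of_lt hy)

private lemma integrable0 (ν s : ℝ) (hs : 0 < s) :
    IntegrableOn (fun y => Real.exp (-s * Real.cosh y) * Real.cosh (ν * y))
      (Set.Ioi (0 : ℝ)) := by
  apply Integrable.mono (integrable1 ν s hs)
  · exact (Continuous.aestronglyMeasurable (by continuity)).restrict
  · filter_upwards [ae_restrict_mem measurableSet_Ioi] with y _
    rw [Real.norm_eq_abs, Real.norm_eq_abs, abs_of_nonneg (integrand_nonneg ν s y),
      abs_of_nonneg (mul_nonneg (Real.cosh_pos _).le (integrand_nonneg ν s y))]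
    exact le_mul_of_one_le_left (integrand_nonneg ν s y) (Real.one_le_cosh y)

noncomputable def I0 (ν s : ℝ) : ℝ :=
  ∫ y in Set.Ioi (0 : ℝ), Real.exp (-s * Real.cosh y) * Real.cosh (ν * y)

noncomputable def I1 (ν s : ℝ) : ℝ :=
  ∫ y in Set.Ioi (0 : ℝ), Real.cosh y * (Real.exp (-s * Real.cosh y) * Real.cosh (ν * y))

private lemma I0_pos (ν s : ℝ) (hs : 0 < s) : 0 < I0 ν s := by
  rw [I0]
  rw [setIntegral_pos_iff_support_of_nonneg_ae]
  · have : Function.support (fun y => Real.exp (-s * Real.cosh y) * Real.cosh (ν * y))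
        = Set.univ := by
      ext y; simp only [Function.mem_support, Set.mem_univ, iff_true]
      positivity
    rw [this, Set.univ_inter, Real.volume_Ioi]
    exact ENNReal.zero_lt_top
  · filter_upwards with y using integrand_nonneg ν s y
  · exact integrable0 ν s hs

private lemma I0_le_I1 (ν s : ℝ) (hs : 0 < s) : I0 ν s ≤ I1 ν s := by
  apply setIntegral_mono_on (integrable0 ν s hs) (integrable1 ν s hs) measurableSet_Ioi
  intro y _
  exact le_mul_of_one_le_left (integrand_nonneg ν s y) (Real.one_le_cosh y)

private lemma hasDerivAt_I0 (ν s : ℝ) (hs : 0 < s) :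
    HasDerivAt (I0 ν) (-(I1 ν s)) s := by
  set c := s / 2 with hc
  have hc0 : 0 < c := by positivity
  have key := hasDerivAt_integral_of_dominated_loc_of_deriv_le (μ := volume.restrict (Set.Ioi 0))
    (F := fun (x : ℝ) (y : ℝ) => Real.exp (-x * Real.cosh y) * Real.cosh (ν * y))
    (F' := fun (x : ℝ) (y : ℝ) =>
      -(Real.cosh y * (Real.exp (-x * Real.cosh y) * Real.cosh (ν * y))))
    (x₀ := s)
    (bound := fun y => Real.exp (-c) * Real.exp (-(c / 2) * y ^ 2 + (|ν| + 1) * y))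
    (ball_mem_nhds s hc0)
    (Filter.Eventually.of_forall fun x =>
      (Continuous.aestronglyMeasurable (by continuity)).restrict)
    (integrable0 ν s hs)
    ((Continuous.aestronglyMeasurable (by continuity)).restrict)
    ?_ ?_ ?_
  · have heq : (∫ y in Set.Ioi (0:ℝ),
        -(Real.cosh y * (Real.exp (-s * Real.cosh y) * Real.cosh (ν * y)))) = -(I1 ν s) := by
      rw [integral_neg]; rfl
    rw [heq] at key
    exact key.2
  · filter_upwards [ae_restrict_mem measurableSet_Ioi] with y hy x hx
    rw [norm_neg, Real.norm_eq_abs,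
      abs_of_nonneg (mul_nonneg (Real.cosh_pos _).le (integrand_nonneg ν x y))]
    have hxc : c ≤ x := by
      have := abs_lt.mp (mem_ball_iff_norm.mp hx)
      have := abs_lt.mp (by simpa using mem_ball_iff_norm.mp hx)
      linarith [this.1]
    exact point_bound ν c x y hc0 hxc (le_of_lt hy)
  · exact ((gauss_lin_integrable (c / 2) (|ν| + 1) (by positivity)).const_mul _).restrict
  · filter_upwards [ae_restrict_mem measurableSet_Ioi] with y _ x _
    have h1 : HasDerivAt (fun x : ℝ => -x * Real.cosh y) (-Real.cosh y) x := by
      simpa using ((hasDerivAt_id x).neg.mul_const (Real.cosh y))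
    have h2 := (h1.exp).mul_const (Real.cosh (ν * y))
    exact h2.congr_deriv (by ring)

theorem mu_minus_rho_log_deriv_pos (μ : ℝ) (hμ : 0 < μ) (ℓ : ℝ) (hℓ : ℓ = |μ - 1| / 2)
    (K : ℝ → ℝ → ℝ)
    (hK : ∀ ν t, K ν t = ∫ y in Set.Ioi (0 : ℝ),
        Real.exp (-t * Real.cosh y) * Real.cosh (ν * y))
    (ρ : ℝ → ℝ) (hρ : ∀ t, ρ t = (1 + t) ^ ((μ + 1) / 2) * K ℓ (1 + t)) :
    ∀ t : ℝ, 0 ≤ t → 0 < μ / (1 + t) - deriv ρ t / ρ t := by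
  intro t ht
  set p : ℝ := (μ + 1) / 2 with hp
  set s : ℝ := 1 + t with hsdef
  have hs1 : (1 : ℝ) ≤ s := by simp [hsdef]; linarith
  have hs0 : (0 : ℝ) < s := by linarith
  have hKI : ∀ u, K ℓ u = I0 ℓ u := fun u => by rw [hK]; rfl
  set A := I0 ℓ s with hA
  set B := I1 ℓ s with hB
  have hApos : 0 < A := I0_pos ℓ s hs0
  have hAB : A ≤ B := I0_le_I1 ℓ s hs0
  -- derivative of ρ
  have h1 : HasDerivAt (fun t : ℝ => 1 + t) 1 t := by
    exact (hasDerivAt_id' t).const_add (1 : ℝ)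
  have h2 : HasDerivAt (fun t : ℝ => (1 + t) ^ p) (p * s ^ (p - 1)) t := by
    have := (Real.hasDerivAt_rpow_const (x := s) (p := p) (Or.inl (ne_of_gt hs0))).comp t h1
    rw [mul_one] at this; exact this
  have h3 : HasDerivAt (fun t : ℝ => K ℓ (1 + t)) (-B) t := by
    have := (hasDerivAt_I0 ℓ s hs0).comp t h1
    rw [mul_one] at this
    have heq : (fun t : ℝ => K ℓ (1 + t)) = fun t : ℝ => I0 ℓ (1 + t) := by
      funext u; exact hKI _
    rw [heq]
    exact this
  have hρfun : ρ = fun t : ℝ => (1 + t) ^ p * K ℓ (1 + t) := funext hρ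
  have h4 : HasDerivAt ρ (p * s ^ (p - 1) * K ℓ s + s ^ p * (-B)) t := by
    rw [hρfun]
    simpa [hsdef, Pi.mul_def] using h2.mul h3
  have hderiv : deriv ρ t = p * s ^ (p - 1) * A + s ^ p * (-B) := by
    rw [h4.deriv, hKI, hA]
  have hρt : ρ t = s ^ p * A := by rw [hρ, hKI, hsdef, hA]
  have hsp : (0 : ℝ) < s ^ p := Real.rpow_pos_of_pos hs0 p
  -- compute deriv ρ t / ρ t
  have hdiv : deriv ρ t / ρ t = p / s - B / A := by
    rw [hderiv, hρt]
    have hspm : s ^ (p - 1) = s ^ p / s := by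
      rw [Real.rpow_sub hs0, Real.rpow_one]
    rw [hspm]
    field_simp
    ring
  rw [hdiv]
  have hBA : (1 : ℝ) ≤ B / A := (one_le_div hApos).mpr hAB
  have hmp : -(1 / 2 : ℝ) < μ - p := by rw [hp]; linarith
  have h5 : -(1 : ℝ) < (μ - p) / s := by
    rw [lt_div_iff₀ hs0]
    nlinarith
  have h6 : μ / s - p / s = (μ - p) / s := by ring
  linarith [h6 ▸ h5]
end

section
/- Let μ > 0, ℓ = |μ-1|/2, and ρ(t) = (1+t)^{(μ+1)/2}·K_ℓ(1+t). Then ρ solves the ODE ρ''(s) - ρ(s) - d/ds( μ/(1+s)·ρ(s) ) = 0 for s ≥ 0. -/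
open Real MeasureTheory Set Filter Metric Asymptotics Topology

noncomputable def besselAux (ν : ℝ) (n : ℕ) (t : ℝ) : ℝ :=
  ∫ y in Ioi (0:ℝ), Real.cosh y ^ n * Real.exp (-t * Real.cosh y) * Real.cosh (ν * y)

lemma tendstoAux (b c : ℝ) (hb : 0 < b) :
    Tendsto (fun y : ℝ => b * Real.exp y - c * y) atTop atTop := by
  have h0 : Tendsto (fun y : ℝ => y ^ 1 * Real.exp (-y)) atTop (𝓝 0) :=
    tendsto_pow_mul_exp_neg_atTop_nhds_zero 1
  have h1 : Tendsto (fun y : ℝ => b - c * (y * Real.exp (-y))) atTop (𝓝 b) := by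
    have := (h0.const_mul c).const_sub b
    simpa using this
  have h2 : Tendsto (fun y : ℝ => (b - c * (y * Real.exp (-y))) * Real.exp y) atTop atTop :=
    h1.pos_mul_atTop hb Real.tendsto_exp_atTop
  refine h2.congr fun y => ?_
  have he : Real.exp (-y) = (Real.exp y)⁻¹ := Real.exp_neg y
  have hpos := (Real.exp_pos y).ne'
  rw [he]
  field_simp

lemma tendstoAux0 (b c : ℝ) (hb : 0 < b) :
    Tendsto (fun y : ℝ => Real.exp (c * y - b * Real.exp y)) atTop (𝓝 0) := by
  apply Real.tendsto_exp_atBot.comp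
  have h : Tendsto (fun y : ℝ => -(b * Real.exp y - c * y)) atTop atBot :=
    tendsto_neg_atBot_iff.mpr (tendstoAux b c hb)
  refine h.congr fun y => by ring

lemma coshBoundAux {ν t : ℝ} (hν : 0 ≤ ν) (ht : 0 < t) (n : ℕ) :
    ∀ y : ℝ, 0 ≤ y →
      Real.cosh y ^ n * Real.exp (-t * Real.cosh y) * Real.cosh (ν * y)
        ≤ Real.exp (((n : ℝ) + ν) * y - t / 2 * Real.exp y) := by
  intro y hy
  have h1 : Real.cosh y ≤ Real.exp y := by
    rw [Real.cosh_eq]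
    have := Real.exp_le_exp.mpr (neg_le_self hy)
    linarith
  have h2 : Real.cosh (ν * y) ≤ Real.exp (ν * y) := by
    rw [Real.cosh_eq]
    have := Real.exp_le_exp.mpr (neg_le_self (mul_nonneg hν hy))
    linarith
  have h3 : Real.exp (-t * Real.cosh y) ≤ Real.exp (-(t / 2) * Real.exp y) := by
    apply Real.exp_le_exp.mpr
    have hc : Real.exp y / 2 ≤ Real.cosh y := by
      rw [Real.cosh_eq]
      have := (Real.exp_pos (-y)).le
      linarith
    nlinarith
  calc Real.cosh y ^ n * Real.exp (-t * Real.cosh y) * Real.cosh (ν * y)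
      ≤ Real.exp y ^ n * Real.exp (-(t / 2) * Real.exp y) * Real.exp (ν * y) := by
        have hcp := (Real.cosh_pos y).le
        have hcp2 := (Real.cosh_pos (ν * y)).le
        have hep := (Real.exp_pos (-t * Real.cosh y)).le
        gcongr
    _ = Real.exp (((n : ℝ) + ν) * y - t / 2 * Real.exp y) := by
        rw [← Real.exp_nat_mul, ← Real.exp_add, ← Real.exp_add]
        ring_nf

lemma integrableAux {ν t : ℝ} (hν : 0 ≤ ν) (ht : 0 < t) (n : ℕ) :
    IntegrableOn (fun y => Real.cosh y ^ n * Real.exp (-t * Real.cosh y) * Real.cosh (ν * y))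
      (Ioi (0:ℝ)) := by
  apply integrable_of_isBigO_exp_neg (b := 1) one_pos
  · fun_prop
  · have hlo : (fun y : ℝ => Real.exp (((n : ℝ) + ν) * y - t / 2 * Real.exp y)) =o[atTop]
        (fun y : ℝ => Real.exp (-1 * y)) := by
      rw [isLittleO_exp_comp_exp_comp]
      have := tendstoAux (t / 2) ((n : ℝ) + ν + 1) (half_pos ht)
      refine this.congr fun y => by ring
    refine IsBigO.trans ?_ hlo.isBigO
    rw [isBigO_iff]
    refine ⟨1, ?_⟩
    filter_upwards [eventually_ge_atTop (0:ℝ)] with y hy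
    have hb := coshBoundAux hν ht n y hy
    have hpos : 0 ≤ Real.cosh y ^ n * Real.exp (-t * Real.cosh y) * Real.cosh (ν * y) := by
      positivity
    rw [Real.norm_eq_abs, Real.norm_eq_abs, abs_of_nonneg hpos,
      abs_of_nonneg (Real.exp_pos _).le, one_mul]
    exact hb

lemma hasDerivAux {ν : ℝ} (hν : 0 ≤ ν) (n : ℕ) {t : ℝ} (ht : 0 < t) :
    HasDerivAt (besselAux ν n) (-(besselAux ν (n + 1) t)) t := by
  have key := hasDerivAt_integral_of_dominated_loc_of_deriv_le
    (μ := volume.restrict (Ioi (0:ℝ))) (x₀ := t)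
    (F := fun x y => Real.cosh y ^ n * Real.exp (-x * Real.cosh y) * Real.cosh (ν * y))
    (F' := fun x y => -(Real.cosh y ^ (n + 1) * Real.exp (-x * Real.cosh y) * Real.cosh (ν * y)))
    (bound := fun y => Real.cosh y ^ (n + 1) * Real.exp (-(t / 2) * Real.cosh y) * Real.cosh (ν * y))
    (Metric.ball_mem_nhds t (half_pos ht))
    (Eventually.of_forall fun x => (by fun_prop : Continuous fun y =>
      Real.cosh y ^ n * Real.exp (-x * Real.cosh y) * Real.cosh (ν * y)).aestronglyMeasurable)
    (integrableAux hν ht n)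
    ((by fun_prop : Continuous fun y : ℝ =>
      -(Real.cosh y ^ (n + 1) * Real.exp (-t * Real.cosh y) * Real.cosh (ν * y))).aestronglyMeasurable)
    (Eventually.of_forall fun y => fun x hx => ?_)
    (integrableAux hν (half_pos ht) (n + 1))
    (Eventually.of_forall fun y => fun x hx => ?_)
  · have h2 := key.2
    rw [MeasureTheory.integral_neg] at h2
    exact h2
  · -- bound
    rw [Real.norm_eq_abs, abs_neg, abs_of_nonneg (by positivity)]
    have hx2 : t / 2 < x := by
      rw [Metric.mem_ball, Real.dist_eq, abs_lt] at hx
      linarith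
    have : Real.exp (-x * Real.cosh y) ≤ Real.exp (-(t / 2) * Real.cosh y) := by
      apply Real.exp_le_exp.mpr
      nlinarith [Real.cosh_pos y]
    have hcp : (0:ℝ) ≤ Real.cosh y ^ (n + 1) := by positivity
    have hcp2 := (Real.cosh_pos (ν * y)).le
    exact mul_le_mul_of_nonneg_right (mul_le_mul_of_nonneg_left this hcp) hcp2
  · -- differentiability
    have h0 : HasDerivAt (fun x : ℝ => -x * Real.cosh y) (-1 * Real.cosh y) x :=
      (hasDerivAt_id x).neg.mul_const _
    have h1 := ((h0.exp.const_mul (Real.cosh y ^ n)).mul_const (Real.cosh (ν * y)))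
    refine h1.congr_deriv ?_
    symm
    show -(Real.cosh y ^ (n + 1) * Real.exp (-x * Real.cosh y) * Real.cosh (ν * y)) = _
    rw [pow_succ]
    ring

lemma besselODEAux {ν t : ℝ} (hν : 0 ≤ ν) (ht : 0 < t) :
    t ^ 2 * besselAux ν 2 t - t * besselAux ν 1 t - (t ^ 2 + ν ^ 2) * besselAux ν 0 t = 0 := by
  set F : ℝ → ℝ := fun y =>
    -(Real.exp (-t * Real.cosh y) * (t * Real.sinh y * Real.cosh (ν * y) + ν * Real.sinh (ν * y)))
    with hF
  set G : ℝ → ℝ := fun y => Real.exp (-t * Real.cosh y) *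
    ((t ^ 2 * Real.cosh y ^ 2 - t * Real.cosh y - t ^ 2 - ν ^ 2) * Real.cosh (ν * y)) with hG
  have hFderiv : ∀ y : ℝ, HasDerivAt F (G y) y := by
    intro y
    have hcosh : HasDerivAt (fun y : ℝ => -t * Real.cosh y) (-t * Real.sinh y) y :=
      (Real.hasDerivAt_cosh y).const_mul (-t)
    have hexp := hcosh.exp
    have hid : HasDerivAt (fun y : ℝ => ν * y) ν y := by
      simpa using (hasDerivAt_id y).const_mul ν
    have hcoshν : HasDerivAt (fun y : ℝ => Real.cosh (ν * y)) (Real.sinh (ν * y) * ν) y :=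
      (Real.hasDerivAt_cosh (ν * y)).comp y hid
    have hsinhν : HasDerivAt (fun y : ℝ => Real.sinh (ν * y)) (Real.cosh (ν * y) * ν) y :=
      (Real.hasDerivAt_sinh (ν * y)).comp y hid
    have hsinh : HasDerivAt (fun y : ℝ => t * Real.sinh y) (t * Real.cosh y) y :=
      (Real.hasDerivAt_sinh y).const_mul t
    have hv := (hsinh.mul hcoshν).add (hsinhν.const_mul ν)
    have hall := (hexp.mul hv).neg
    refine hall.congr_deriv ?_
    symm
    have hpyth : Real.cosh y ^ 2 - Real.sinh y ^ 2 = 1 := Real.cosh_sq_sub_sinh_sq y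
    show Real.exp (-t * Real.cosh y) *
      ((t ^ 2 * Real.cosh y ^ 2 - t * Real.cosh y - t ^ 2 - ν ^ 2) * Real.cosh (ν * y)) = _
    simp only [Pi.mul_apply, Pi.add_apply]
    linear_combination (Real.exp (-t * Real.cosh y) * Real.cosh (ν * y) * t ^ 2) * hpyth
  have hGint : IntegrableOn G (Ioi (0:ℝ)) := by
    have h2 : IntegrableOn (fun y : ℝ => t ^ 2 * (Real.cosh y ^ 2 * Real.exp (-t * Real.cosh y) * Real.cosh (ν * y))) (Ioi (0:ℝ)) := (integrableAux hν ht 2).const_mul (t ^ 2)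
    have h1 : IntegrableOn (fun y : ℝ => t * (Real.cosh y ^ 1 * Real.exp (-t * Real.cosh y) * Real.cosh (ν * y))) (Ioi (0:ℝ)) := (integrableAux hν ht 1).const_mul t
    have h0 : IntegrableOn (fun y : ℝ => (t ^ 2 + ν ^ 2) * (Real.cosh y ^ 0 * Real.exp (-t * Real.cosh y) * Real.cosh (ν * y))) (Ioi (0:ℝ)) := (integrableAux hν ht 0).const_mul (t ^ 2 + ν ^ 2)
    refine MeasureTheory.IntegrableOn.congr_fun ((h2.sub h1).sub h0) (fun y _ => ?_)
      measurableSet_Ioi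
    simp only [hG, Pi.sub_apply, pow_zero, pow_one, pow_two]
    try ring
  have hFtends : Tendsto F atTop (𝓝 0) := by
    have hg : Tendsto (fun y : ℝ => (t + ν) * Real.exp ((1 + ν) * y - t / 2 * Real.exp y))
        atTop (𝓝 0) := by
      simpa using (tendstoAux0 (t / 2) (1 + ν) (half_pos ht)).const_mul (t + ν)
    refine squeeze_zero_norm' ?_ hg
    filter_upwards [eventually_ge_atTop (0:ℝ)] with y hy
    have h1 : Real.sinh y ≤ Real.exp y := (Real.sinh_lt_cosh y).le.trans (by
      rw [Real.cosh_eq]; have := Real.exp_le_exp.mpr (neg_le_self hy); linarith)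
    have h1' : 0 ≤ Real.sinh y := by
      rw [Real.sinh_eq]; have := Real.exp_le_exp.mpr (neg_le_self hy); linarith
    have h2 : Real.sinh (ν * y) ≤ Real.exp (ν * y) := (Real.sinh_lt_cosh _).le.trans (by
      rw [Real.cosh_eq]
      have := Real.exp_le_exp.mpr (neg_le_self (mul_nonneg hν hy)); linarith)
    have h2' : 0 ≤ Real.sinh (ν * y) := by
      rw [Real.sinh_eq]
      have := Real.exp_le_exp.mpr (neg_le_self (mul_nonneg hν hy)); linarith
    have hcν : Real.cosh (ν * y) ≤ Real.exp (ν * y) := by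
      rw [Real.cosh_eq]
      have := Real.exp_le_exp.mpr (neg_le_self (mul_nonneg hν hy)); linarith
    have h3 : Real.exp (-t * Real.cosh y) ≤ Real.exp (-(t / 2) * Real.exp y) := by
      apply Real.exp_le_exp.mpr
      have hc : Real.exp y / 2 ≤ Real.cosh y := by
        rw [Real.cosh_eq]; have := (Real.exp_pos (-y)).le; linarith
      nlinarith
    have hmono : Real.exp (ν * y) ≤ Real.exp ((1 + ν) * y) :=
      Real.exp_le_exp.mpr (by nlinarith)
    have hxy : Real.exp y * Real.exp (ν * y) = Real.exp ((1 + ν) * y) := by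
      rw [← Real.exp_add]; ring_nf
    have hinner : t * Real.sinh y * Real.cosh (ν * y) + ν * Real.sinh (ν * y)
        ≤ (t + ν) * Real.exp ((1 + ν) * y) := by
      have hprod : Real.sinh y * Real.cosh (ν * y) ≤ Real.exp y * Real.exp (ν * y) :=
        mul_le_mul h1 hcν (Real.cosh_pos _).le (Real.exp_pos y).le
      have hA : t * Real.sinh y * Real.cosh (ν * y) ≤ t * Real.exp ((1 + ν) * y) := by
        rw [← hxy]; nlinarith
      have hB : ν * Real.sinh (ν * y) ≤ ν * Real.exp ((1 + ν) * y) := by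
        have hh : Real.sinh (ν * y) ≤ Real.exp ((1 + ν) * y) := h2.trans hmono
        nlinarith
      linarith
    have hinner' : 0 ≤ t * Real.sinh y * Real.cosh (ν * y) + ν * Real.sinh (ν * y) := by
      have := mul_nonneg (mul_nonneg ht.le h1') (Real.cosh_pos (ν * y)).le
      have := mul_nonneg hν h2'
      linarith
    rw [hF, Real.norm_eq_abs, abs_neg, abs_of_nonneg (by positivity)]
    calc Real.exp (-t * Real.cosh y) *
          (t * Real.sinh y * Real.cosh (ν * y) + ν * Real.sinh (ν * y))
        ≤ Real.exp (-(t / 2) * Real.exp y) * ((t + ν) * Real.exp ((1 + ν) * y)) := by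
          have := (Real.exp_pos (-t * Real.cosh y)).le
          have := (Real.exp_pos (-(t / 2) * Real.exp y)).le
          nlinarith [Real.exp_pos ((1 + ν) * y)]
      _ = (t + ν) * Real.exp ((1 + ν) * y - t / 2 * Real.exp y) := by
          have hsplit : Real.exp ((1 + ν) * y - t / 2 * Real.exp y) =
              Real.exp (-(t / 2) * Real.exp y) * Real.exp ((1 + ν) * y) := by
            rw [← Real.exp_add]; ring_nf
          rw [hsplit]; ring
  have hF0 : F 0 = 0 := by simp [hF]
  have hint := integral_Ioi_of_hasDerivAt_of_tendsto
    ((hFderiv 0).continuousAt.continuousWithinAt)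
    (fun x _ => hFderiv x) hGint hFtends
  rw [hF0, sub_zero] at hint
  -- hint : ∫ y in Ioi 0, G y = 0
  have hlin : ∫ y in Ioi (0:ℝ), G y =
      t ^ 2 * besselAux ν 2 t - t * besselAux ν 1 t - (t ^ 2 + ν ^ 2) * besselAux ν 0 t := by
    have i2 : Integrable (fun y : ℝ => t ^ 2 * (Real.cosh y ^ 2 * Real.exp (-t * Real.cosh y) * Real.cosh (ν * y))) (volume.restrict (Ioi (0:ℝ))) := (integrableAux hν ht 2).const_mul _
    have i1 : Integrable (fun y : ℝ => t * (Real.cosh y ^ 1 * Real.exp (-t * Real.cosh y) * Real.cosh (ν * y))) (volume.restrict (Ioi (0:ℝ))) := (integrableAux hν ht 1).const_mul _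
    have i0 : Integrable (fun y : ℝ => (t ^ 2 + ν ^ 2) * (Real.cosh y ^ 0 * Real.exp (-t * Real.cosh y) * Real.cosh (ν * y))) (volume.restrict (Ioi (0:ℝ))) := (integrableAux hν ht 0).const_mul _
    have i21 : Integrable (fun y : ℝ => t ^ 2 * (Real.cosh y ^ 2 * Real.exp (-t * Real.cosh y) * Real.cosh (ν * y)) - t * (Real.cosh y ^ 1 * Real.exp (-t * Real.cosh y) * Real.cosh (ν * y))) (volume.restrict (Ioi (0:ℝ))) := i2.sub i1
    rw [besselAux, besselAux, besselAux, ← MeasureTheory.integral_const_mul,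
      ← MeasureTheory.integral_const_mul, ← MeasureTheory.integral_const_mul,
      ← MeasureTheory.integral_sub i2 i1, ← MeasureTheory.integral_sub i21 i0]
    refine setIntegral_congr_fun measurableSet_Ioi fun y _ => ?_
    simp only [hG, pow_zero, pow_one, pow_two]
    ring
  rw [hlin] at hint
  exact hint

theorem rho_solves_ode (μ : ℝ) (hμ : 0 < μ) (ℓ : ℝ) (hℓ : ℓ = |μ - 1| / 2)
    (K : ℝ → ℝ → ℝ)
    (hK : ∀ ν t, K ν t = ∫ y in Set.Ioi (0 : ℝ),
        Real.exp (-t * Real.cosh y) * Real.cosh (ν * y))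
    (ρ : ℝ → ℝ) (hρ : ∀ t, ρ t = (1 + t) ^ ((μ + 1) / 2) * K ℓ (1 + t)) :
    ∀ s : ℝ, 0 ≤ s →
      deriv (deriv ρ) s - ρ s - deriv (fun τ => μ / (1 + τ) * ρ τ) s = 0 := by
  intro s hs
  have hν : 0 ≤ ℓ := by rw [hℓ]; positivity
  set a : ℝ := (μ + 1) / 2 with ha
  have hρfun : ρ = fun t => (1 + t) ^ a * besselAux ℓ 0 (1 + t) := by
    funext t
    rw [hρ, hK, besselAux]
    simp [pow_zero]
  -- derivative of the rpow part
  have hpow : ∀ (p : ℝ) (τ : ℝ), 0 < 1 + τ →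
      HasDerivAt (fun τ : ℝ => (1 + τ) ^ p) (p * (1 + τ) ^ (p - 1)) τ := by
    intro p τ hτ
    have hin : HasDerivAt (fun τ : ℝ => 1 + τ) 1 τ := by
      simpa using (hasDerivAt_id τ).const_add 1
    have h := (Real.hasDerivAt_rpow_const (x := 1 + τ) (p := p) (Or.inl hτ.ne')).comp τ hin
    exact h.congr_deriv (mul_one _)
  have hB : ∀ (n : ℕ) (τ : ℝ), 0 < 1 + τ →
      HasDerivAt (fun τ : ℝ => besselAux ℓ n (1 + τ)) (-(besselAux ℓ (n + 1) (1 + τ))) τ := by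
    intro n τ hτ
    have hin : HasDerivAt (fun τ : ℝ => 1 + τ) 1 τ := by
      simpa using (hasDerivAt_id τ).const_add 1
    have h := (hasDerivAux hν n hτ).comp τ hin
    exact h.congr_deriv (mul_one _)
  -- first derivative of ρ
  set ρ1 : ℝ → ℝ := fun τ =>
    a * (1 + τ) ^ (a - 1) * besselAux ℓ 0 (1 + τ) - (1 + τ) ^ a * besselAux ℓ 1 (1 + τ) with hρ1
  have hρ' : ∀ τ : ℝ, 0 < 1 + τ → HasDerivAt ρ (ρ1 τ) τ := by
    intro τ hτ
    rw [hρfun]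
    have h := (hpow a τ hτ).mul (hB 0 τ hτ)
    refine h.congr_deriv ?_
    symm
    simp only [hρ1]
    ring
  have hd1 : deriv ρ =ᶠ[𝓝 s] ρ1 := by
    filter_upwards [Ioi_mem_nhds (show (-1:ℝ) < s by linarith)] with τ hτ
    have hτ' : (0:ℝ) < 1 + τ := by simp only [Set.mem_Ioi] at hτ; linarith
    exact (hρ' τ hτ').deriv
  have hx : (0:ℝ) < 1 + s := by linarith
  -- second derivative
  have hρ1' : HasDerivAt ρ1
      (a * ((a - 1) * (1 + s) ^ (a - 1 - 1)) * besselAux ℓ 0 (1 + s)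
        + a * (1 + s) ^ (a - 1) * (-(besselAux ℓ 1 (1 + s)))
        - (a * (1 + s) ^ (a - 1) * besselAux ℓ 1 (1 + s)
            + (1 + s) ^ a * (-(besselAux ℓ 2 (1 + s))))) s := by
    have h1 := ((hpow (a - 1) s hx).const_mul a).mul (hB 0 s hx)
    have h2 := (hpow a s hx).mul (hB 1 s hx)
    have h := h1.sub h2
    refine h.congr_deriv ?_
    symm
    try ring
  have hd2 : deriv (deriv ρ) s =
      a * ((a - 1) * (1 + s) ^ (a - 1 - 1)) * besselAux ℓ 0 (1 + s)
        + a * (1 + s) ^ (a - 1) * (-(besselAux ℓ 1 (1 + s)))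
        - (a * (1 + s) ^ (a - 1) * besselAux ℓ 1 (1 + s)
            + (1 + s) ^ a * (-(besselAux ℓ 2 (1 + s)))) := by
    rw [hd1.deriv_eq]
    exact hρ1'.deriv
  -- the drift term
  have hh : (fun τ => μ / (1 + τ) * ρ τ) =ᶠ[𝓝 s]
      (fun τ => μ * ((1 + τ) ^ (a - 1) * besselAux ℓ 0 (1 + τ))) := by
    filter_upwards [Ioi_mem_nhds (show (-1:ℝ) < s by linarith)] with τ hτ
    have hτ' : (0:ℝ) < 1 + τ := by simp only [Set.mem_Ioi] at hτ; linarith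
    rw [hρfun]
    have : (1 + τ) ^ (a - 1) = (1 + τ) ^ a / (1 + τ) := by
      rw [Real.rpow_sub hτ', Real.rpow_one]
    rw [this]
    field_simp
  have hh' : HasDerivAt (fun τ => μ * ((1 + τ) ^ (a - 1) * besselAux ℓ 0 (1 + τ)))
      (μ * ((a - 1) * (1 + s) ^ (a - 1 - 1) * besselAux ℓ 0 (1 + s)
        + (1 + s) ^ (a - 1) * (-(besselAux ℓ 1 (1 + s))))) s := by
    have h := ((hpow (a - 1) s hx).mul (hB 0 s hx)).const_mul μ
    refine h.congr_deriv ?_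
    symm
    try ring
  have hd3 : deriv (fun τ => μ / (1 + τ) * ρ τ) s =
      μ * ((a - 1) * (1 + s) ^ (a - 1 - 1) * besselAux ℓ 0 (1 + s)
        + (1 + s) ^ (a - 1) * (-(besselAux ℓ 1 (1 + s)))) := by
    rw [hh.deriv_eq]
    exact hh'.deriv
  -- Bessel equation
  have hbessel := besselODEAux hν hx
  -- rpow algebra
  have hxpow1 : (1 + s) ^ (a - 1) = (1 + s) ^ (a - 1 - 1) * (1 + s) := by
    rw [← Real.rpow_add_one hx.ne' (a - 1 - 1)]
    ring_nf
  have hxpow2 : (1 + s) ^ a = (1 + s) ^ (a - 1 - 1) * ((1 + s) * (1 + s)) := by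
    rw [← mul_assoc, ← Real.rpow_add_one hx.ne' (a - 1 - 1), ← Real.rpow_add_one hx.ne']
    ring_nf
  have hℓ2 : ℓ ^ 2 = (μ - 1) ^ 2 / 4 := by
    rw [hℓ, div_pow, sq_abs]
    norm_num
  have hρs : ρ s = (1 + s) ^ a * besselAux ℓ 0 (1 + s) := by rw [hρfun]
  rw [hd2, hd3, hρs, hxpow1, hxpow2, ha]
  linear_combination (1 + s) ^ ((μ + 1) / 2 - 1 - 1) * hbessel
    + besselAux ℓ 0 (1 + s) * (1 + s) ^ ((μ + 1) / 2 - 1 - 1) * hℓ2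
end

section
/- Let r ≥ 1 and R > 0, and let φ be a continuous positive function on ℝⁿ with φ(x) ≤ C_n·(1+|x|)^{-(n-1)/2}·e^{|x|} for all x. Then there exists C = C(n,r,R,C_n) > 0 such that ∫_{B_{R+t}} φ(x)^r dx ≤ C·e^{rt}·(R+t)^{(n-1)(1 - r/2)} for all t ≥ 0. -/
open MeasureTheory Real Set intervalIntegral

set_option maxHeartbeats 1000000

lemma aux_key (a u : ℝ) (ha : 1 ≤ a) (hu : 0 ≤ u) :
    (1 + u) ^ a ≤ (2*a) ^ a * Real.exp (u/2) := by
  have h2a : (0:ℝ) < 2*a := by linarith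
  have h0 : 2*a*(u/(2*a)) = u := by field_simp
  have h1 : 1 + u ≤ 2*a * Real.exp (u/(2*a)) := by
    have h2 := mul_le_mul_of_nonneg_left (Real.add_one_le_exp (u/(2*a))) h2a.le
    rw [mul_add, h0, mul_one] at h2
    linarith
  calc (1+u)^a ≤ (2*a * Real.exp (u/(2*a)))^a :=
        Real.rpow_le_rpow (by linarith) h1 (by linarith)
    _ = (2*a)^a * Real.exp (u/2) := by
        rw [Real.mul_rpow h2a.le (Real.exp_pos _).le, ← Real.exp_mul]
        congr 1
        field_simp

lemma aux_point (a β y M : ℝ) (ha : 1 ≤ a) (hab : -β ≤ a) (hy : 0 ≤ y) (hyM : y ≤ M) :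
    (1+y)^β ≤ (2*a)^a * ((1+M)^β * Real.exp ((M-y)/2)) := by
  have hK1 : (1:ℝ) ≤ (2*a)^a := Real.one_le_rpow (by linarith) (by linarith)
  have h1y : (0:ℝ) < 1 + y := by linarith
  have h1M : (0:ℝ) < 1 + M := by linarith
  have hu : (0:ℝ) ≤ M - y := by linarith
  have hexp1 : (1:ℝ) ≤ Real.exp ((M-y)/2) := Real.one_le_exp (by linarith)
  rcases le_or_gt 0 β with hβ | hβ
  · calc (1+y)^β ≤ (1+M)^β := Real.rpow_le_rpow h1y.le (by linarith) hβ
      _ = 1 * ((1+M)^β * 1) := by ring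
      _ ≤ (2*a)^a * ((1+M)^β * Real.exp ((M-y)/2)) := by
          have := Real.rpow_nonneg h1M.le β
          gcongr
  · set b := -β with hb
    have hb0 : 0 < b := by simp [hb]; linarith
    have hyb : (0:ℝ) < (1+y)^b := Real.rpow_pos_of_pos h1y b
    have hMb : (0:ℝ) < (1+M)^b := Real.rpow_pos_of_pos h1M b
    have key : (1+M)^b ≤ (1+y)^b * ((2*a)^a * Real.exp ((M-y)/2)) := by
      have h2 : (1+M) ≤ (1+y) * (1+(M-y)) := by nlinarith
      calc (1+M)^b ≤ ((1+y)*(1+(M-y)))^b := Real.rpow_le_rpow h1M.le h2 hb0.le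
        _ = (1+y)^b * (1+(M-y))^b := Real.mul_rpow h1y.le (by linarith)
        _ ≤ (1+y)^b * (1+(M-y))^a :=
            mul_le_mul_of_nonneg_left
              (Real.rpow_le_rpow_of_exponent_le (by linarith) hab) hyb.le
        _ ≤ (1+y)^b * ((2*a)^a * Real.exp ((M-y)/2)) := by
            gcongr
            exact aux_key a (M-y) ha hu
    have hβy : (1+y)^β = ((1+y)^b)⁻¹ := by
      rw [show β = -b by simp [hb], Real.rpow_neg h1y.le]
    have hβM : (1+M)^β = ((1+M)^b)⁻¹ := by
      rw [show β = -b by simp [hb], Real.rpow_neg h1M.le]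
    rw [hβy, hβM]
    rw [inv_le_iff_one_le_mul₀ hyb]
    rw [show (2*a)^a * (((1+M)^b)⁻¹ * Real.exp ((M-y)/2)) * (1+y)^b
        = ((1+y)^b * ((2*a)^a * Real.exp ((M-y)/2))) * ((1+M)^b)⁻¹ from by ring]
    rw [le_mul_inv_iff₀ hMb, one_mul]
    exact key

lemma aux_int (M D : ℝ) (hM : 0 ≤ M) (hD : 0 ≤ D) :
    ∫ y in Set.Ioc 0 M, D * Real.exp ((y - M)/2) ≤ 2 * D := by
  rw [← intervalIntegral.integral_of_le hM]
  have h : ∀ y : ℝ, D * Real.exp ((y-M)/2) = (D * Real.exp (-(M/2))) * Real.exp (y*(1/2)) := by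
    intro y
    rw [mul_assoc, ← Real.exp_add]
    congr 2
    ring
  simp_rw [h]
  rw [intervalIntegral.integral_const_mul]
  have h2 : ∫ y in (0:ℝ)..M, Real.exp (y*(1/2)) = 2*(Real.exp (M/2) - 1) := by
    have h3 := intervalIntegral.mul_integral_comp_mul_right (f := Real.exp) (a := 0) (b := M) (1/2)
    rw [show (∫ (x : ℝ) in (0*(1/2):ℝ)..(M*(1/2)), Real.exp x) = Real.exp (M*(1/2)) - Real.exp (0*(1/2)) from integral_exp] at h3
    norm_num at h3 ⊢
    linarith
  rw [h2]
  have hid : Real.exp (-(M/2)) * Real.exp (M/2) = 1 := by rw [← Real.exp_add]; simp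
  nlinarith [Real.exp_pos (-(M/2)), Real.exp_pos (M/2)]

theorem integral_phi_pow_ball_bound (n : ℕ) (hn : 2 ≤ n) (r R Cn : ℝ)
    (hr : 1 ≤ r) (hR : 0 < R) (hCn : 0 < Cn)
    (φ : EuclideanSpace ℝ (Fin n) → ℝ) (hφcont : Continuous φ)
    (hφpos : ∀ x, 0 < φ x)
    (hφbound : ∀ x, φ x ≤ Cn * (1 + ‖x‖) ^ (-((n : ℝ) - 1) / 2) * Real.exp ‖x‖) :
    ∃ C : ℝ, 0 < C ∧ ∀ t : ℝ, 0 ≤ t →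
      (∫ x in Metric.closedBall (0 : EuclideanSpace ℝ (Fin n)) (R + t), (φ x) ^ r)
        ≤ C * Real.exp (r * t) * (R + t) ^ (((n : ℝ) - 1) * (1 - r / 2)) := by
  have hr0 : (0:ℝ) ≤ r := by linarith
  have hn1 : (1:ℝ) ≤ (n:ℝ) := by exact_mod_cast Nat.one_le_of_lt hn
  haveI : Nonempty (Fin n) := ⟨⟨0, by omega⟩⟩
  haveI : Nontrivial (EuclideanSpace ℝ (Fin n)) := inferInstance
  set β : ℝ := ((n:ℝ)-1) * (1 - r/2) with hβ
  set q : ℝ := -((n:ℝ)-1)/2 * r with hq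
  have hβq : ((n:ℝ)-1) + q = β := by rw [hβ, hq]; ring
  set a : ℝ := max (-β) 1 with haa
  have ha1 : (1:ℝ) ≤ a := le_max_right _ _
  have hab : -β ≤ a := le_max_left _ _
  set K : ℝ := (2*a)^a with hKdef
  have hK0 : (0:ℝ) < K := Real.rpow_pos_of_pos (by linarith) a
  set V : ℝ := (volume (Metric.ball (0 : EuclideanSpace ℝ (Fin n)) 1)).toReal with hVdef
  have hV0 : (0:ℝ) < V := by
    apply ENNReal.toReal_pos
    · exact (Metric.measure_ball_pos _ _ one_pos).ne'
    · exact measure_ball_lt_top.ne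
  set cR : ℝ := max ((1+1/R)^β) 1 with hcR
  have hcR0 : (0:ℝ) < cR := lt_of_lt_of_le one_pos (le_max_right _ _)
  have hn0 : (0:ℝ) < n := by linarith
  refine ⟨(n * V) * (Cn^r) * (2*K) * cR * Real.exp (r*R), by positivity, ?_⟩
  intro t ht
  set M : ℝ := R + t with hMdef
  have hM0 : (0:ℝ) < M := by rw [hMdef]; linarith
  have hMR : R ≤ M := by rw [hMdef]; linarith
  set g : ℝ → ℝ := fun y => Cn^r * (1+y)^q * Real.exp (y*r) with hg
  set D : ℝ := Cn^r * (K * ((1+M)^β * Real.exp (M*r))) with hD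
  have hD0 : (0:ℝ) ≤ D := by
    rw [hD]; positivity
  -- continuity facts
  have hGc : Continuous (fun x : EuclideanSpace ℝ (Fin n) => g ‖x‖) := by
    rw [hg]
    refine ((continuous_const.mul ?_).mul ?_)
    · exact (continuous_const.add continuous_norm).rpow_const
        (fun x => Or.inl (ne_of_gt (add_pos_of_pos_of_nonneg one_pos (norm_nonneg x))))
    · exact (continuous_norm.mul continuous_const).rexp
  have hφrc : Continuous (fun x => φ x ^ r) :=
    hφcont.rpow_const (fun x => Or.inr hr0)
  -- step 1 : pointwise bound on the ball
  have step1 : (∫ x in Metric.closedBall (0 : EuclideanSpace ℝ (Fin n)) M, (φ x) ^ r)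
      ≤ ∫ x in Metric.closedBall (0 : EuclideanSpace ℝ (Fin n)) M, g ‖x‖ := by
    apply setIntegral_mono_on
    · exact hφrc.continuousOn.integrableOn_compact (isCompact_closedBall _ _)
    · exact hGc.continuousOn.integrableOn_compact (isCompact_closedBall _ _)
    · exact measurableSet_closedBall
    · intro x _
      have hb : (0:ℝ) < 1 + ‖x‖ := by positivity
      calc (φ x) ^ r ≤ (Cn * (1+‖x‖)^(-((n:ℝ)-1)/2) * Real.exp ‖x‖) ^ r :=
            Real.rpow_le_rpow (hφpos x).le (hφbound x) hr0
        _ = g ‖x‖ := by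
            rw [hg]
            simp only []
            rw [Real.mul_rpow (by positivity) (Real.exp_pos _).le,
              Real.mul_rpow hCn.le (by positivity),
              ← Real.rpow_mul hb.le, ← Real.exp_mul]
  -- step 2 : polar coordinates
  have step2 : (∫ x in Metric.closedBall (0 : EuclideanSpace ℝ (Fin n)) M, g ‖x‖)
      = n * (V * ∫ y in Set.Ioc 0 M, y^(n-1) * g y) := by
    rw [← MeasureTheory.integral_indicator measurableSet_closedBall]
    have heq : (Set.indicator (Metric.closedBall (0 : EuclideanSpace ℝ (Fin n)) M)
        (fun x => g ‖x‖)) = fun x => Set.indicator (Set.Iic M) g ‖x‖ := by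
      funext x
      classical
      rw [Set.indicator_apply, Set.indicator_apply]
      simp [Metric.mem_closedBall, dist_zero_right, Set.mem_Iic]
    rw [heq, MeasureTheory.integral_fun_norm_addHaar volume (Set.indicator (Set.Iic M) g)]
    rw [finrank_euclideanSpace_fin]
    rw [nsmul_eq_mul, smul_eq_mul, measureReal_def, ← hVdef]
    congr 2
    have h2 : ∀ y : ℝ, y^(n-1) • Set.indicator (Set.Iic M) g y
        = Set.indicator (Set.Iic M) (fun y => y^(n-1) * g y) y := by
      intro y
      simp only [smul_eq_mul, Set.indicator_apply]
      split_ifs <;> simp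
    simp_rw [h2]
    rw [MeasureTheory.setIntegral_indicator measurableSet_Iic, Set.Ioi_inter_Iic]
  -- step 3 : bound the radial integral
  have step3 : (∫ y in Set.Ioc 0 M, y^(n-1) * g y)
      ≤ ∫ y in Set.Ioc 0 M, D * Real.exp ((y-M)/2) := by
    apply setIntegral_mono_on
    · apply MeasureTheory.IntegrableOn.mono_set _ Set.Ioc_subset_Icc_self
      apply ContinuousOn.integrableOn_compact isCompact_Icc
      have hc1 : ContinuousOn (fun y : ℝ => (1+y)^q) (Set.Icc 0 M) :=
        (continuousOn_const.add continuousOn_id).rpow_const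
          (fun y hy => Or.inl (by show (1:ℝ) + y ≠ 0; intro hc; nlinarith [hy.1]))
      have hgc' : ContinuousOn g (Set.Icc 0 M) := by
        rw [hg]
        exact (continuousOn_const.mul hc1).mul
          ((continuous_id.mul continuous_const).rexp.continuousOn)
      exact (continuous_pow (n-1)).continuousOn.mul hgc'
    · exact ((continuous_const.mul ((continuous_id.sub continuous_const).div_const
        2).rexp).continuousOn.integrableOn_compact isCompact_Icc).mono_set
        Set.Ioc_subset_Icc_self
    · exact measurableSet_Ioc
    · intro y hy
      have h0y : (0:ℝ) ≤ y := hy.1.le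
      have hyM : y ≤ M := hy.2
      have h1y : (0:ℝ) < 1 + y := by linarith
      have e1 : (y:ℝ)^(n-1) ≤ (1+y)^(n-1) := pow_le_pow_left₀ h0y (by linarith) _
      have e2 : ((1+y):ℝ)^(n-1) = (1+y)^(((n:ℝ))-1) := by
        rw [← Real.rpow_natCast (1+y) (n-1)]
        congr 1
        push_cast [Nat.cast_sub (by omega : 1 ≤ n)]
        ring
      have e3 : (1+y)^(((n:ℝ))-1) * (1+y)^q = (1+y)^β := by
        rw [← Real.rpow_add h1y, hβq]
      have e4 := aux_point a β y M ha1 hab h0y hyM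
      have e5 : Real.exp ((M-y)/2) * Real.exp (y*r) ≤ Real.exp (M*r) * Real.exp ((y-M)/2) := by
        rw [← Real.exp_add, ← Real.exp_add]
        apply Real.exp_le_exp.mpr
        nlinarith [hyM, hr]
      have hq0 : (0:ℝ) ≤ (1+y)^q := Real.rpow_nonneg h1y.le q
      calc y^(n-1) * g y = Cn^r * (y^(n-1) * (1+y)^q) * Real.exp (y*r) := by
            rw [hg]; ring
        _ ≤ Cn^r * ((1+y)^β) * Real.exp (y*r) := by
            have : y^(n-1) * (1+y)^q ≤ (1+y)^β := by
              rw [← e3]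
              apply mul_le_mul_of_nonneg_right _ hq0
              rw [← e2]; exact e1
            have hCnr : (0:ℝ) ≤ Cn^r := Real.rpow_nonneg hCn.le r
            apply mul_le_mul_of_nonneg_right _ (Real.exp_pos _).le
            exact mul_le_mul_of_nonneg_left this hCnr
        _ ≤ Cn^r * (K * ((1+M)^β * Real.exp ((M-y)/2))) * Real.exp (y*r) := by
            have hCnr : (0:ℝ) ≤ Cn^r := Real.rpow_nonneg hCn.le r
            apply mul_le_mul_of_nonneg_right _ (Real.exp_pos _).le
            exact mul_le_mul_of_nonneg_left e4 hCnr
        _ = Cn^r * K * (1+M)^β * (Real.exp ((M-y)/2) * Real.exp (y*r)) := by ring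
        _ ≤ Cn^r * K * (1+M)^β * (Real.exp (M*r) * Real.exp ((y-M)/2)) := by
            have hnn : (0:ℝ) ≤ Cn^r * K * (1+M)^β := by
              have := Real.rpow_nonneg (by linarith : (0:ℝ) ≤ 1+M) β
              have := Real.rpow_nonneg hCn.le r
              positivity
            exact mul_le_mul_of_nonneg_left e5 hnn
        _ = D * Real.exp ((y-M)/2) := by rw [hD]; ring
  have step4 : (∫ y in Set.Ioc 0 M, D * Real.exp ((y-M)/2)) ≤ 2*D :=
    aux_int M D hM0.le hD0
  -- combine
  have h1M : (0:ℝ) < 1 + M := by linarith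
  have hfin : (1+M)^β ≤ cR * M^β := by
    rcases le_or_gt 0 β with hb | hb
    · have h1 : (1:ℝ) ≤ M / R := (one_le_div hR).mpr hMR
      have h2 : 1 + M ≤ (1+1/R)*M := by
        have : M / R = M * (1/R) := by ring
        nlinarith
      calc (1+M)^β ≤ ((1+1/R)*M)^β := Real.rpow_le_rpow h1M.le h2 hb
        _ = (1+1/R)^β * M^β := Real.mul_rpow (by positivity) hM0.le
        _ ≤ cR * M^β := mul_le_mul_of_nonneg_right (le_max_left _ _)
            (Real.rpow_nonneg hM0.le β)
    · calc (1+M)^β ≤ M^β := Real.rpow_le_rpow_of_nonpos hM0 (by linarith) hb.le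
        _ ≤ cR * M^β := by
            nlinarith [Real.rpow_nonneg hM0.le β, le_max_right ((1+1/R)^β) (1:ℝ)]
  have hexpM : Real.exp (M*r) = Real.exp (r*R) * Real.exp (r*t) := by
    rw [← Real.exp_add, hMdef]; ring_nf
  calc (∫ x in Metric.closedBall (0 : EuclideanSpace ℝ (Fin n)) M, (φ x) ^ r)
      ≤ ∫ x in Metric.closedBall (0 : EuclideanSpace ℝ (Fin n)) M, g ‖x‖ := step1
    _ = n * (V * ∫ y in Set.Ioc 0 M, y^(n-1) * g y) := step2
    _ ≤ n * (V * (2*D)) := by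
        have := mul_le_mul_of_nonneg_left (step3.trans step4) hV0.le
        exact mul_le_mul_of_nonneg_left this hn0.le
    _ = (n*V*Cn^r*(2*K)) * ((1+M)^β * (Real.exp (r*R) * Real.exp (r*t))) := by
        rw [hD, ← hexpM]; ring
    _ ≤ (n*V*Cn^r*(2*K)) * ((cR * M^β) * (Real.exp (r*R) * Real.exp (r*t))) := by
        have hCnr : (0:ℝ) ≤ Cn^r := Real.rpow_nonneg hCn.le r
        have hnn : (0:ℝ) ≤ n*V*Cn^r*(2*K) := by positivity
        apply mul_le_mul_of_nonneg_left _ hnn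
        exact mul_le_mul_of_nonneg_right hfin (by positivity)
    _ = (n * V) * (Cn^r) * (2*K) * cR * Real.exp (r*R) * Real.exp (r*t) * M^β := by ring
end
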